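/- arXiv:2412.09052 — 4 statements merged into one kernel-verified Lean document; each statement's English description precedes it below -/
import Mathlib

section
/- Let 𝐔₁, …, 𝐔_T be subspaces of ℝⁿ, all of dimension d, such that d₂(𝐔_j, 𝐔_{j+1}) ≤ c for j = 1, …, T−1 and some c ≥ 0. Let w̄₁, …, w̄_T ∈ ℝⁿ be vectors with w̄_j ∈ 𝐔_j for each j, let W̄ ∈ ℝ^{n×T} be the matrix with columns w̄₁, …, w̄_T, and let D = diag(T−1, T−2, …, 1, 0) ∈ ℝ^{T×T}. Then ‖P_{𝐔_T}^⊥ W̄‖_F ≤ c · ‖W̄ D‖_F. -/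
open Matrix

/-- Frobenius norm of a matrix. -/
noncomputable def frob {n m : ℕ} (A : Matrix (Fin n) (Fin m) ℝ) : ℝ :=
  Real.sqrt (Matrix.trace (Aᵀ * A))

namespace Stmt4Aux

variable {n d : ℕ}

lemma dot_self_nonneg (v : Fin n → ℝ) : 0 ≤ v ⬝ᵥ v :=
  Finset.sum_nonneg fun i _ => mul_self_nonneg _

noncomputable def N (v : Fin n → ℝ) : ℝ := Real.sqrt (v ⬝ᵥ v)

lemma N_nonneg (v : Fin n → ℝ) : 0 ≤ N v := Real.sqrt_nonneg _

lemma sq_N (v : Fin n → ℝ) : N v ^ 2 = v ⬝ᵥ v := Real.sq_sqrt (dot_self_nonneg v)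

lemma dot_le_N_mul_N (v w : Fin n → ℝ) : v ⬝ᵥ w ≤ N v * N w := by
  have h := Finset.sum_mul_sq_le_sq_mul_sq Finset.univ v w
  have h2 : (v ⬝ᵥ w)^2 ≤ (v ⬝ᵥ v) * (w ⬝ᵥ w) := by
    simpa [dotProduct, pow_two] using h
  nlinarith [h2, sq_N v, sq_N w, N_nonneg v, N_nonneg w,
    mul_nonneg (N_nonneg v) (N_nonneg w)]

lemma N_add_le (a b : Fin n → ℝ) : N (a + b) ≤ N a + N b := by
  have hab := dot_le_N_mul_N a b
  have hd : (a+b) ⬝ᵥ (a+b) = a ⬝ᵥ a + 2*(a ⬝ᵥ b) + b ⬝ᵥ b := by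
    simp [add_dotProduct, dotProduct_add, dotProduct_comm b a]; ring
  have h : (a+b) ⬝ᵥ (a+b) ≤ (N a + N b)^2 := by
    rw [hd]; nlinarith [sq_N a, sq_N b]
  calc N (a+b) ≤ Real.sqrt ((N a + N b)^2) := Real.sqrt_le_sqrt h
    _ = N a + N b := Real.sqrt_sq (add_nonneg (N_nonneg a) (N_nonneg b))

lemma trace_transpose_mul_self (A : Matrix (Fin n) (Fin d) ℝ) :
    Matrix.trace (Aᵀ * A) = ∑ j, ∑ i, A i j ^ 2 := by
  simp [Matrix.trace, Matrix.mul_apply, Matrix.diag, pow_two]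

lemma trace_transpose_mul_self_nonneg (A : Matrix (Fin n) (Fin d) ℝ) :
    0 ≤ Matrix.trace (Aᵀ * A) := by
  rw [trace_transpose_mul_self]
  exact Finset.sum_nonneg fun j _ => Finset.sum_nonneg fun i _ => sq_nonneg _

lemma mulVec_dot_le (A : Matrix (Fin n) (Fin n) ℝ) (x : Fin n → ℝ) :
    (A *ᵥ x) ⬝ᵥ (A *ᵥ x) ≤ Matrix.trace (Aᵀ * A) * (x ⬝ᵥ x) := by
  have key : ∀ i, ((A *ᵥ x) i)^2 ≤ (∑ k, A i k ^2) * (x ⬝ᵥ x) := by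
    intro i
    have := Finset.sum_mul_sq_le_sq_mul_sq Finset.univ (fun k => A i k) x
    simpa [Matrix.mulVec, dotProduct, pow_two] using this
  calc (A *ᵥ x) ⬝ᵥ (A *ᵥ x) = ∑ i, ((A *ᵥ x) i)^2 := by simp [dotProduct, pow_two]
    _ ≤ ∑ i, (∑ k, A i k ^2) * (x ⬝ᵥ x) := Finset.sum_le_sum fun i _ => key i
    _ = (∑ i, ∑ k, A i k ^2) * (x ⬝ᵥ x) := by rw [← Finset.sum_mul]
    _ = Matrix.trace (Aᵀ * A) * (x ⬝ᵥ x) := by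
        rw [trace_transpose_mul_self, Finset.sum_comm]

lemma N_mulVec_le (A : Matrix (Fin n) (Fin n) ℝ) (x : Fin n → ℝ) :
    N (A *ᵥ x) ≤ Real.sqrt (Matrix.trace (Aᵀ * A)) * N x := by
  have := Real.sqrt_le_sqrt (mulVec_dot_le A x)
  rwa [Real.sqrt_mul (trace_transpose_mul_self_nonneg A)] at this


lemma mulVec_dot {m : ℕ} (A : Matrix (Fin m) (Fin n) ℝ) (x : Fin n → ℝ) (y : Fin m → ℝ) :
    (A *ᵥ x) ⬝ᵥ y = x ⬝ᵥ (Aᵀ *ᵥ y) := by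
  rw [dotProduct_comm, Matrix.dotProduct_mulVec, ← Matrix.mulVec_transpose,
    dotProduct_comm]

lemma idem_aux (A : Matrix (Fin n) (Fin d) ℝ) (hA : Aᵀ * A = 1) :
    (A * Aᵀ) * (A * Aᵀ) = A * Aᵀ := by
  calc (A * Aᵀ) * (A * Aᵀ) = A * (Aᵀ * (A * Aᵀ)) := by rw [Matrix.mul_assoc]
    _ = A * ((Aᵀ * A) * Aᵀ) := by rw [Matrix.mul_assoc]
    _ = A * Aᵀ := by rw [hA, Matrix.one_mul]

lemma proj_idem (A : Matrix (Fin n) (Fin d) ℝ) (hA : Aᵀ * A = 1) :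
    (1 - A * Aᵀ) * (1 - A * Aᵀ) = 1 - A * Aᵀ := by
  rw [sub_mul, one_mul, mul_sub, mul_one, idem_aux A hA]
  abel

lemma proj_contract (A : Matrix (Fin n) (Fin d) ℝ) (hA : Aᵀ * A = 1)
    (x : Fin n → ℝ) :
    ((1 - A * Aᵀ) *ᵥ x) ⬝ᵥ ((1 - A * Aᵀ) *ᵥ x) ≤ x ⬝ᵥ x := by
  have hTr : (1 - A * Aᵀ)ᵀ = 1 - A * Aᵀ := by simp [transpose_sub, transpose_mul]
  have h1 : ((1 - A * Aᵀ) *ᵥ x) ⬝ᵥ ((1 - A * Aᵀ) *ᵥ x) = x ⬝ᵥ ((1 - A * Aᵀ) *ᵥ x) := by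
    rw [mulVec_dot, hTr, Matrix.mulVec_mulVec, proj_idem A hA]
  have h2 : x ⬝ᵥ ((A * Aᵀ) *ᵥ x) = (Aᵀ *ᵥ x) ⬝ᵥ (Aᵀ *ᵥ x) := by
    rw [mulVec_dot Aᵀ x (Aᵀ *ᵥ x), transpose_transpose, Matrix.mulVec_mulVec]
  rw [h1, Matrix.sub_mulVec, Matrix.one_mulVec, dotProduct_sub, h2]
  have := dot_self_nonneg (Aᵀ *ᵥ x)
  linarith

lemma N_proj_contract (A : Matrix (Fin n) (Fin d) ℝ) (hA : Aᵀ * A = 1)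
    (x : Fin n → ℝ) : N ((1 - A * Aᵀ) *ᵥ x) ≤ N x :=
  Real.sqrt_le_sqrt (proj_contract A hA x)

lemma trace_key (A B : Matrix (Fin n) (Fin d) ℝ) (hA : Aᵀ * A = 1) (hB : Bᵀ * B = 1) :
    Matrix.trace ((((1 - B * Bᵀ) * (A * Aᵀ))ᵀ) * ((1 - B * Bᵀ) * (A * Aᵀ)))
      = Matrix.trace ((1 - A * Aᵀ) * (B * Bᵀ)) := by
  set P := A * Aᵀ with hP
  set Q := B * Bᵀ with hQ
  have hPt : Pᵀ = P := by simp [hP, transpose_mul]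
  have hQt : (1 - Q)ᵀ = 1 - Q := by simp [hQ, transpose_sub, transpose_mul]
  have hPP : P * P = P := idem_aux A hA
  have hQQ : (1 - Q) * (1 - Q) = 1 - Q := proj_idem B hB
  have h1 : ((1 - Q) * P)ᵀ = P * (1 - Q) := by rw [transpose_mul, hPt, hQt]
  rw [h1]
  have h2 : P * (1 - Q) * ((1 - Q) * P) = P * (1 - Q) * P := by
    rw [Matrix.mul_assoc P (1-Q) ((1-Q)*P), ← Matrix.mul_assoc (1-Q) (1-Q) P, hQQ,
      ← Matrix.mul_assoc]
  rw [h2]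
  have h3 : Matrix.trace (P * (1 - Q) * P) = Matrix.trace (P * (1 - Q)) := by
    rw [Matrix.trace_mul_comm, ← Matrix.mul_assoc, hPP]
  rw [h3]
  have htrP : Matrix.trace P = Matrix.trace Q := by
    rw [hP, hQ, Matrix.trace_mul_comm A Aᵀ, Matrix.trace_mul_comm B Bᵀ, hA, hB]
  rw [mul_sub, mul_one, sub_mul, one_mul, Matrix.trace_sub, Matrix.trace_sub, htrP,
    Matrix.trace_mul_comm P Q]


lemma key {n d T : ℕ}
    (U : Fin T → Matrix (Fin n) (Fin d) ℝ)
    (hU : ∀ j, (U j)ᵀ * U j = 1)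
    (c : ℝ)
    (hUc : ∀ (j : Fin T) (hj : (j : ℕ) + 1 < T),
      Real.sqrt (Matrix.trace
        ((1 - U j * (U j)ᵀ) * (U ⟨(j : ℕ) + 1, hj⟩ * (U ⟨(j : ℕ) + 1, hj⟩)ᵀ))) ≤ c)
    (w : Fin T → Fin n → ℝ)
    (hw : ∀ j, ∃ z : Fin d → ℝ, w j = (U j).mulVec z) :
    ∀ (m : ℕ) (j : Fin T) (h : (j : ℕ) + m < T),
      N ((1 - U ⟨(j:ℕ)+m, h⟩ * (U ⟨(j:ℕ)+m, h⟩)ᵀ) *ᵥ w j) ≤ c * m * N (w j) := by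
  intro m
  induction m with
  | zero =>
    intro j h
    have e : (⟨(j:ℕ)+0, h⟩ : Fin T) = j := Fin.ext (Nat.add_zero _)
    rw [e]
    obtain ⟨z, hz⟩ := hw j
    have h0 : (1 - U j * (U j)ᵀ) *ᵥ w j = 0 := by
      rw [hz, Matrix.mulVec_mulVec]
      have hz0 : (1 - U j * (U j)ᵀ) * U j = 0 := by
        rw [Matrix.sub_mul, Matrix.one_mul, Matrix.mul_assoc, hU j, Matrix.mul_one, sub_self]
      rw [hz0, Matrix.zero_mulVec]
    rw [h0]
    simp [N]
  | succ m ih =>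
    intro j h
    have hm : (j:ℕ) + m < T := by omega
    set K : Fin T := ⟨(j:ℕ)+m, hm⟩ with hK
    set K' : Fin T := ⟨(j:ℕ)+(m+1), h⟩ with hK'
    have hdec : (1 - U K' * (U K')ᵀ) *ᵥ w j
        = ((1 - U K' * (U K')ᵀ) * (U K * (U K)ᵀ)) *ᵥ w j
          + (1 - U K' * (U K')ᵀ) *ᵥ ((1 - U K * (U K)ᵀ) *ᵥ w j) := by
      rw [Matrix.mulVec_mulVec, ← Matrix.add_mulVec, ← mul_add, add_sub_cancel, mul_one]
    rw [hdec]
    have hb : N ((1 - U K' * (U K')ᵀ) *ᵥ ((1 - U K * (U K)ᵀ) *ᵥ w j))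
        ≤ c * m * N (w j) :=
      le_trans (N_proj_contract (U K') (hU K') _) (ih j hm)
    have ha : N (((1 - U K' * (U K')ᵀ) * (U K * (U K)ᵀ)) *ᵥ w j) ≤ c * N (w j) := by
      have h1 := N_mulVec_le ((1 - U K' * (U K')ᵀ) * (U K * (U K)ᵀ)) (w j)
      have h2 : Real.sqrt (Matrix.trace
          ((((1 - U K' * (U K')ᵀ) * (U K * (U K)ᵀ))ᵀ)
            * ((1 - U K' * (U K')ᵀ) * (U K * (U K)ᵀ)))) ≤ c := by
        rw [trace_key (U K) (U K') (hU K) (hU K')]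
        exact hUc K h
      calc N (((1 - U K' * (U K')ᵀ) * (U K * (U K)ᵀ)) *ᵥ w j)
          ≤ Real.sqrt (Matrix.trace
            ((((1 - U K' * (U K')ᵀ) * (U K * (U K)ᵀ))ᵀ)
              * ((1 - U K' * (U K')ᵀ) * (U K * (U K)ᵀ)))) * N (w j) := h1
        _ ≤ c * N (w j) := mul_le_mul_of_nonneg_right h2 (N_nonneg _)
    calc N (((1 - U K' * (U K')ᵀ) * (U K * (U K)ᵀ)) *ᵥ w j
          + (1 - U K' * (U K')ᵀ) *ᵥ ((1 - U K * (U K)ᵀ) *ᵥ w j))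
        ≤ N (((1 - U K' * (U K')ᵀ) * (U K * (U K)ᵀ)) *ᵥ w j)
          + N ((1 - U K' * (U K')ᵀ) *ᵥ ((1 - U K * (U K)ᵀ) *ᵥ w j)) := N_add_le _ _
      _ ≤ c * N (w j) + c * m * N (w j) := add_le_add ha hb
      _ = c * (m+1 : ℕ) * N (w j) := by push_cast; ring

end Stmt4Aux

open Stmt4Aux

/-- Let `𝐔₁, …, 𝐔_T` be subspaces of `ℝⁿ`, all of dimension `d`
(represented by orthonormal matrices `U j ∈ ℝ^{n×d}`, so `P_{𝐔_j} = (U j)(U j)ᵀ`),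
such that `d₂(𝐔_j, 𝐔_{j+1}) ≤ c` for `j = 1, …, T−1` and some `c ≥ 0`.
Let `w̄₁, …, w̄_T ∈ ℝⁿ` be vectors with `w̄_j ∈ 𝐔_j` for each `j`, let
`W̄ ∈ ℝ^{n×T}` be the matrix with columns `w̄₁, …, w̄_T`, and let
`D = diag(T−1, T−2, …, 1, 0) ∈ ℝ^{T×T}`. Then
`‖P_{𝐔_T}^⊥ W̄‖_F ≤ c · ‖W̄ D‖_F`. -/
theorem stmt4 {n d T : ℕ} (hT : 0 < T)
    (U : Fin T → Matrix (Fin n) (Fin d) ℝ)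
    (hU : ∀ j, (U j)ᵀ * U j = 1)
    (c : ℝ) (hc : 0 ≤ c)
    (hUc : ∀ (j : Fin T) (hj : (j : ℕ) + 1 < T),
      Real.sqrt (Matrix.trace
        ((1 - U j * (U j)ᵀ) * (U ⟨(j : ℕ) + 1, hj⟩ * (U ⟨(j : ℕ) + 1, hj⟩)ᵀ))) ≤ c)
    (w : Fin T → Fin n → ℝ)
    (hw : ∀ j, ∃ z : Fin d → ℝ, w j = (U j).mulVec z)
    (Wbar : Matrix (Fin n) (Fin T) ℝ) (hWbar : Wbar = Matrix.of fun i j => w j i)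
    (D : Matrix (Fin T) (Fin T) ℝ)
    (hD : D = Matrix.diagonal fun j : Fin T => (T : ℝ) - 1 - (j : ℕ)) :
    frob ((1 - U ⟨T - 1, by omega⟩ * (U ⟨T - 1, by omega⟩)ᵀ) * Wbar)
      ≤ c * frob (Wbar * D) := by
  have hT1 : T - 1 < T := by omega
  have hM :
      (1 - U ⟨T - 1, by omega⟩ * (U ⟨T - 1, by omega⟩)ᵀ : Matrix (Fin n) (Fin n) ℝ)
        = 1 - U ⟨T - 1, hT1⟩ * (U ⟨T - 1, hT1⟩)ᵀ := rfl
  set M : Matrix (Fin n) (Fin n) ℝ := 1 - U ⟨T - 1, hT1⟩ * (U ⟨T - 1, hT1⟩)ᵀ with hMdef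
  rw [hM]
  have hL : Matrix.trace ((M * Wbar)ᵀ * (M * Wbar))
      = ∑ j, (M *ᵥ w j) ⬝ᵥ (M *ᵥ w j) := by
    rw [trace_transpose_mul_self]
    refine Finset.sum_congr rfl fun j _ => ?_
    simp [hWbar, Matrix.mul_apply, Matrix.mulVec, dotProduct, pow_two]
  have hR : Matrix.trace ((Wbar * D)ᵀ * (Wbar * D))
      = ∑ j : Fin T, ((T : ℝ) - 1 - (j : ℕ))^2 * (w j ⬝ᵥ w j) := by
    rw [trace_transpose_mul_self]
    refine Finset.sum_congr rfl fun j _ => ?_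
    have he : ∀ i, (Wbar * D) i j = w j i * ((T : ℝ) - 1 - (j : ℕ)) := by
      intro i; rw [hD, Matrix.mul_diagonal, hWbar]; rfl
    simp only [he, dotProduct, Finset.mul_sum]
    refine Finset.sum_congr rfl fun i _ => by ring
  have hbound : ∀ j : Fin T, (M *ᵥ w j) ⬝ᵥ (M *ᵥ w j)
      ≤ c^2 * (((T : ℝ) - 1 - (j : ℕ))^2 * (w j ⬝ᵥ w j)) := by
    intro j
    have hjT := j.isLt
    have hjm : (j : ℕ) + (T - 1 - (j : ℕ)) < T := by omega
    have hidx : (⟨(j : ℕ) + (T - 1 - (j : ℕ)), hjm⟩ : Fin T) = ⟨T - 1, hT1⟩ :=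
      Fin.ext (show (j : ℕ) + (T - 1 - (j : ℕ)) = T - 1 by omega)
    have hk := key U hU c hUc w hw (T - 1 - (j : ℕ)) j hjm
    rw [hidx] at hk
    have hcast : ((T - 1 - (j : ℕ) : ℕ) : ℝ) = (T : ℝ) - 1 - (j : ℕ) := by
      have h1 : (1 : ℕ) ≤ T := hT
      have h2 : (j : ℕ) ≤ T - 1 := by omega
      push_cast [Nat.cast_sub h2, Nat.cast_sub h1]
      ring
    have hsq : N (M *ᵥ w j) ^ 2
        ≤ (c * ((T - 1 - (j : ℕ) : ℕ) : ℝ) * N (w j)) ^ 2 :=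
      pow_le_pow_left₀ (N_nonneg _) hk 2
    calc (M *ᵥ w j) ⬝ᵥ (M *ᵥ w j) = N (M *ᵥ w j) ^ 2 := (sq_N _).symm
      _ ≤ (c * ((T - 1 - (j : ℕ) : ℕ) : ℝ) * N (w j)) ^ 2 := hsq
      _ = c^2 * (((T : ℝ) - 1 - (j : ℕ))^2 * (w j ⬝ᵥ w j)) := by
          rw [hcast, mul_pow, mul_pow, sq_N]
          ring
  have hsum : Matrix.trace ((M * Wbar)ᵀ * (M * Wbar))
      ≤ c^2 * Matrix.trace ((Wbar * D)ᵀ * (Wbar * D)) := by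
    rw [hL, hR, Finset.mul_sum]
    exact Finset.sum_le_sum fun j _ => hbound j
  unfold frob
  calc Real.sqrt (Matrix.trace ((M * Wbar)ᵀ * (M * Wbar)))
      ≤ Real.sqrt (c^2 * Matrix.trace ((Wbar * D)ᵀ * (Wbar * D))) :=
        Real.sqrt_le_sqrt hsum
    _ = c * Real.sqrt (Matrix.trace ((Wbar * D)ᵀ * (Wbar * D))) := by
        rw [Real.sqrt_mul (sq_nonneg c), Real.sqrt_sq hc]
end

section
/- (Signal lower bound on the descent direction.) Let U, Û ∈ ℝ^{n×d} be orthonormal matrices, let W ∈ ℝ^{n×T}, and suppose there is σ̲ > 0 such that ‖W^⊤ U z‖₂ ≥ σ̲ ‖z‖₂ for all z ∈ ℝ^d (i.e., the d-th singular value of P_U W is at least σ̲). Then ⟨−2 P_Û^⊥ P_U Û, −2 P_Û^⊥ P_U W W^⊤ P_U Û⟩_F ≥ σ̲² · ‖2 P_Û^⊥ P_U Û‖_F², i.e., 4 tr(Û^⊤ P_U P_Û^⊥ P_U W W^⊤ P_U Û) ≥ σ̲² · 4 tr(Û^⊤ P_U P_Û^⊥ P_U Û). -/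
/-!
With `G = Uᵀ Û` and `C = (1 - U Uᵀ) Û Ûᵀ U`, orthonormality gives
`Ûᵀ P_U P_Û^⊥ P_U X P_U Û = Gᵀ (1 - G Gᵀ) (Uᵀ X U) G` and `Cᵀ C = G (1 - Gᵀ G) Gᵀ`, so by
cyclicity both traces in the claim have the form `tr (C (Uᵀ X U) Cᵀ)`, with `X = W Wᵀ` or `X = 1`.
The singular value bound says that `Uᵀ W Wᵀ U - σ² 1` is positive semidefinite, hence
`tr (C (Uᵀ W Wᵀ U - σ² 1) Cᵀ) ≥ 0`. The Frobenius form reduces to the trace form because `P_U` and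
`P_Û^⊥` are symmetric idempotents.
-/

open Matrix

noncomputable def enorm₂ {n : ℕ} (v : Fin n → ℝ) : ℝ :=
  Real.sqrt (∑ i, (v i) ^ 2)

noncomputable def finner {n m : ℕ} (A B : Matrix (Fin n) (Fin m) ℝ) : ℝ :=
  Matrix.trace (Aᵀ * B)

lemma enorm₂_sq {d : ℕ} (v : Fin d → ℝ) : enorm₂ v ^ 2 = v ⬝ᵥ v := by
  rw [enorm₂, Real.sq_sqrt (Finset.sum_nonneg fun i _ => sq_nonneg (v i))]
  simp only [dotProduct, sq]

lemma frob_sq {n m : ℕ} (A : Matrix (Fin n) (Fin m) ℝ) : frob A ^ 2 = (Aᵀ * A).trace :=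
  Real.sq_sqrt <| by
    simpa [conjTranspose_eq_transpose_of_trivial] using
      (posSemidef_conjTranspose_mul_self A).trace_nonneg

lemma posSemidef_transpose_mul_self_sub_smul_one {m d : ℕ} {A : Matrix (Fin m) (Fin d) ℝ}
    {c : ℝ} (hc : 0 ≤ c) (h : ∀ z, c * enorm₂ z ≤ enorm₂ (A *ᵥ z)) :
    (Aᵀ * A - c ^ 2 • 1).PosSemidef := by
  refine .of_dotProduct_mulVec_nonneg ?_ fun z => ?_
  · simp [IsHermitian, conjTranspose_eq_transpose_of_trivial, transpose_sub]
  · have hsq := pow_le_pow_left₀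
      (mul_nonneg hc (Real.sqrt_nonneg _) : 0 ≤ c * enorm₂ z) (h z) 2
    rw [mul_pow, enorm₂_sq, enorm₂_sq] at hsq
    simp only [star_trivial, sub_mulVec, ← mulVec_mulVec, dotProduct_sub, smul_mulVec,
      one_mulVec, dotProduct_smul, smul_eq_mul, dotProduct_mulVec _ Aᵀ, vecMul_transpose]
    linarith

lemma mul_trace_mul_transpose_le {k d : Type*} [Fintype k] [Fintype d] [DecidableEq d]
    {M : Matrix d d ℝ} {c : ℝ} (hM : (M - c • 1).PosSemidef) (C : Matrix k d ℝ) :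
    c * (C * Cᵀ).trace ≤ (C * M * Cᵀ).trace := by
  have := (hM.mul_mul_conjTranspose_same C).trace_nonneg
  rw [conjTranspose_eq_transpose_of_trivial, Matrix.mul_sub, Matrix.sub_mul, trace_sub,
    Matrix.mul_smul, Matrix.mul_one, Matrix.smul_mul, trace_smul, smul_eq_mul] at this
  linarith

section Projection

variable {n d : ℕ} {U Uhat : Matrix (Fin n) (Fin d) ℝ}

lemma transpose_mul_mul_of_orthonormal (hU : Uᵀ * U = 1) {k : ℕ}
    (X : Matrix (Fin d) (Fin k) ℝ) : Uᵀ * (U * X) = X := by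
  rw [← Matrix.mul_assoc, hU, Matrix.one_mul]

lemma one_sub_mul_transpose_mul_self (hU : Uᵀ * U = 1) :
    (1 - U * Uᵀ) * (1 - U * Uᵀ) = 1 - U * Uᵀ := by
  simp only [Matrix.sub_mul, Matrix.mul_sub, Matrix.one_mul, Matrix.mul_one, Matrix.mul_assoc,
    transpose_mul_mul_of_orthonormal hU]
  abel

lemma trace_proj_sandwich_eq (hU : Uᵀ * U = 1) (hUhat : Uhatᵀ * Uhat = 1)
    (X : Matrix (Fin n) (Fin n) ℝ) :
    (Uhatᵀ * (U * Uᵀ) * (1 - Uhat * Uhatᵀ) * (U * Uᵀ) * X * (U * Uᵀ) * Uhat).trace =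
      ((1 - U * Uᵀ) * Uhat * Uhatᵀ * U * (Uᵀ * X * U) *
        ((1 - U * Uᵀ) * Uhat * Uhatᵀ * U)ᵀ).trace := by
  set G := Uᵀ * Uhat
  set M := Uᵀ * X * U
  set C := (1 - U * Uᵀ) * Uhat * Uhatᵀ * U
  have hU' := @transpose_mul_mul_of_orthonormal _ _ _ hU
  have hUhat' := @transpose_mul_mul_of_orthonormal _ _ _ hUhat
  have hleft : Uhatᵀ * (U * Uᵀ) * (1 - Uhat * Uhatᵀ) * (U * Uᵀ) * X * (U * Uᵀ) * Uhat =
      Gᵀ * (1 - G * Gᵀ) * M * G := by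
    simp only [G, M, transpose_mul, transpose_transpose, Matrix.sub_mul, Matrix.mul_sub,
      Matrix.mul_one, Matrix.mul_assoc, hU']
  have hC : Cᵀ * C = G * (1 - Gᵀ * G) * Gᵀ := by
    simp only [C, G, transpose_mul, transpose_sub, transpose_transpose,
      Matrix.sub_mul, Matrix.mul_sub, Matrix.one_mul, Matrix.mul_one, Matrix.mul_assoc, hU',
      hUhat']
    abel
  calc (Uhatᵀ * (U * Uᵀ) * (1 - Uhat * Uhatᵀ) * (U * Uᵀ) * X * (U * Uᵀ) * Uhat).trace
      = (G * Gᵀ * (1 - G * Gᵀ) * M).trace := by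
        rw [hleft, trace_mul_comm]; simp only [Matrix.mul_assoc]
    _ = (Cᵀ * C * M).trace := by rw [hC]; congr 2; noncomm_ring
    _ = (C * M * Cᵀ).trace := by rw [Matrix.mul_assoc, trace_mul_comm, Matrix.mul_assoc]

end Projection

/-- Signal lower bound on the descent direction: Let `U, Û ∈ ℝ^{n×d}` be
orthonormal matrices, let `W ∈ ℝ^{n×T}`, and suppose there is `σ̲ > 0` such that
`‖Wᵀ U z‖₂ ≥ σ̲ ‖z‖₂` for all `z ∈ ℝ^d` (i.e. the `d`-th singular value of `P_U W` is
at least `σ̲`). Then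
`⟨−2 P_Û^⊥ P_U Û, −2 P_Û^⊥ P_U W Wᵀ P_U Û⟩_F ≥ σ̲² ‖2 P_Û^⊥ P_U Û‖_F²`, i.e.
`4 tr(Ûᵀ P_U P_Û^⊥ P_U W Wᵀ P_U Û) ≥ σ̲² · 4 tr(Ûᵀ P_U P_Û^⊥ P_U Û)`. -/
theorem stmt8 {n d T : ℕ} (U Uhat : Matrix (Fin n) (Fin d) ℝ)
    (hU : Uᵀ * U = 1) (hUhat : Uhatᵀ * Uhat = 1)
    (W : Matrix (Fin n) (Fin T) ℝ)
    (σmin : ℝ) (hσ : 0 < σmin)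
    (hsv : ∀ z : Fin d → ℝ, σmin * enorm₂ z ≤ enorm₂ (Wᵀ.mulVec (U.mulVec z))) :
    finner ((-2 : ℝ) • ((1 - Uhat * Uhatᵀ) * (U * Uᵀ) * Uhat))
        ((-2 : ℝ) • ((1 - Uhat * Uhatᵀ) * (U * Uᵀ) * W * Wᵀ * (U * Uᵀ) * Uhat))
      ≥ σmin ^ 2 * frob ((2 : ℝ) • ((1 - Uhat * Uhatᵀ) * (U * Uᵀ) * Uhat)) ^ 2 ∧
    4 * Matrix.trace
        (Uhatᵀ * (U * Uᵀ) * (1 - Uhat * Uhatᵀ) * (U * Uᵀ) * W * Wᵀ * (U * Uᵀ) * Uhat)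
      ≥ σmin ^ 2 *
        (4 * Matrix.trace (Uhatᵀ * (U * Uᵀ) * (1 - Uhat * Uhatᵀ) * (U * Uᵀ) * Uhat)) := by
  have hU' := @transpose_mul_mul_of_orthonormal _ _ _ hU
  have hQ : ∀ {k : ℕ} (X : Matrix (Fin n) (Fin k) ℝ),
      (1 - Uhat * Uhatᵀ) * ((1 - Uhat * Uhatᵀ) * X) = (1 - Uhat * Uhatᵀ) * X := fun X => by
    rw [← Matrix.mul_assoc, one_sub_mul_transpose_mul_self hUhat]
  have hsignal : (Uᵀ * (W * Wᵀ) * U - σmin ^ 2 • 1).PosSemidef := by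
    simpa only [transpose_mul, transpose_transpose, Matrix.mul_assoc] using
      posSemidef_transpose_mul_self_sub_smul_one (A := Wᵀ * U) hσ.le
        (by simpa only [mulVec_mulVec] using hsv)
  set C := (1 - U * Uᵀ) * Uhat * Uhatᵀ * U
  have hbound := mul_trace_mul_transpose_le hsignal C
  have hC_one : C * Cᵀ = C * (Uᵀ * (1 : Matrix (Fin n) (Fin n) ℝ) * U) * Cᵀ := by
    rw [Matrix.mul_one, hU, Matrix.mul_one]
  rw [hC_one, ← trace_proj_sandwich_eq hU hUhat, ← trace_proj_sandwich_eq hU hUhat] at hbound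
  simp only [finner, frob_sq, transpose_smul, Matrix.smul_mul, Matrix.mul_smul, trace_smul,
    smul_eq_mul, transpose_mul, transpose_sub, transpose_one, transpose_transpose, Matrix.mul_one,
    Matrix.mul_assoc, hU', hQ] at hbound ⊢
  constructor <;> linarith
end

section
/- (Noise term bound.) Let U, Û ∈ ℝ^{n×d} be orthonormal matrices and W ∈ ℝ^{n×T}. Suppose ‖P_U^⊥ W‖_F ≤ δ for some δ ≥ 0 and ‖W^⊤ U U^⊤ x‖₂ ≤ σ̄ ‖x‖₂ for all x ∈ ℝⁿ for some σ̄ ≥ 0. Let N := 2 P_Û^⊥ (P_U^⊥ W W^⊤ P_U^⊥ + P_U^⊥ W W^⊤ P_U + P_U W W^⊤ P_U^⊥) Û. Then ‖N‖_F ≤ 2δ² + 4σ̄δ. -/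
open Matrix

/-- Euclidean norm of a vector. -/
noncomputable def enorm2 {n : ℕ} (v : Fin n → ℝ) : ℝ :=
  Real.sqrt (∑ i, (v i) ^ 2)

/-!
Write `P = U Uᵀ`, `X = P_U^⊥ W` and `Y = Wᵀ P`. Since `P` and `P_U^⊥` are symmetric, the bracket
in `N` is `X Xᵀ + X Y + (X Y)ᵀ`, whose Frobenius norm is at most `‖X‖_F² + 2 ‖Y‖₂ ‖X‖_F` because
`‖A B‖_F ≤ ‖A‖_F ‖B‖₂`. Multiplying by the projection `P_Û^⊥` on the left and by `Û` on the right
does not increase the Frobenius norm, as both have operator norm at most one.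
-/

attribute [local instance] Matrix.frobeniusSeminormedAddCommGroup Matrix.frobeniusNormedSpace

/-- `‖A‖₂ ≤ σ` for the operator norm induced by the Euclidean norms. -/
def OpNormLE {m n : ℕ} (A : Matrix (Fin m) (Fin n) ℝ) (σ : ℝ) : Prop :=
  ∀ x, enorm2 (A *ᵥ x) ≤ σ * enorm2 x

lemma enorm2_nonneg {n : ℕ} (v : Fin n → ℝ) : 0 ≤ enorm2 v := Real.sqrt_nonneg _

lemma enorm2_sq {n : ℕ} (v : Fin n → ℝ) : enorm2 v ^ 2 = ∑ i, v i ^ 2 :=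
  Real.sq_sqrt (Finset.sum_nonneg fun _ _ => sq_nonneg _)

lemma enorm2_sq_eq_dotProduct {n : ℕ} (v : Fin n → ℝ) : enorm2 v ^ 2 = v ⬝ᵥ v := by
  simp only [enorm2_sq, dotProduct, ← sq]

lemma dotProduct_le_enorm2_mul {n : ℕ} (v w : Fin n → ℝ) : v ⬝ᵥ w ≤ enorm2 v * enorm2 w := by
  simpa [dotProduct, enorm2] using Real.sum_mul_le_sqrt_mul_sqrt Finset.univ v w

lemma enorm2_le_of_sq_le_mul {n : ℕ} {v : Fin n → ℝ} {c : ℝ} (hc : 0 ≤ c)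
    (h : enorm2 v ^ 2 ≤ c * enorm2 v) : enorm2 v ≤ c := by
  nlinarith [enorm2_nonneg v]

lemma frob_eq_frobenius_norm {n m : ℕ} (A : Matrix (Fin n) (Fin m) ℝ) : frob A = ‖A‖ := by
  rw [frob, Matrix.frobenius_norm_def, ← Real.sqrt_eq_rpow, Matrix.trace, Finset.sum_comm]
  simp [Matrix.mul_apply, sq]

lemma frobenius_norm_eq_sqrt_sum_enorm2_rows {m n : ℕ} (M : Matrix (Fin m) (Fin n) ℝ) :
    ‖M‖ = Real.sqrt (∑ i, enorm2 (M i) ^ 2) := by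
  rw [frobenius_norm_def, ← Real.sqrt_eq_rpow]
  simp [enorm2_sq]

namespace OpNormLE

variable {m n : ℕ} {A : Matrix (Fin m) (Fin n) ℝ} {σ : ℝ}

lemma transpose (hσ : 0 ≤ σ) (hA : OpNormLE A σ) : OpNormLE Aᵀ σ := fun y => by
  refine enorm2_le_of_sq_le_mul (mul_nonneg hσ (enorm2_nonneg y)) ?_
  calc enorm2 (Aᵀ *ᵥ y) ^ 2 = y ⬝ᵥ (A *ᵥ (Aᵀ *ᵥ y)) := by
        rw [enorm2_sq_eq_dotProduct, dotProduct_mulVec y, mulVec_transpose]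
    _ ≤ enorm2 y * enorm2 (A *ᵥ (Aᵀ *ᵥ y)) := dotProduct_le_enorm2_mul _ _
    _ ≤ enorm2 y * (σ * enorm2 (Aᵀ *ᵥ y)) := mul_le_mul_of_nonneg_left (hA _) (enorm2_nonneg y)
    _ = σ * enorm2 y * enorm2 (Aᵀ *ᵥ y) := by ring

end OpNormLE

lemma opNormLE_one_of_transpose_mul_self {m n : ℕ} {A : Matrix (Fin m) (Fin n) ℝ}
    (hA : Aᵀ * A = 1) : OpNormLE A 1 := fun x => by
  have hsq : enorm2 (A *ᵥ x) ^ 2 = enorm2 x ^ 2 := by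
    rw [enorm2_sq_eq_dotProduct, enorm2_sq_eq_dotProduct, dotProduct_mulVec, ← mulVec_transpose,
      mulVec_mulVec, hA, one_mulVec]
  rw [one_mul, (pow_left_inj₀ (enorm2_nonneg _) (enorm2_nonneg _) two_ne_zero).1 hsq]

lemma opNormLE_one_of_symm_idem {n : ℕ} {Q : Matrix (Fin n) (Fin n) ℝ} (hsymm : Qᵀ = Q)
    (hidem : Q * Q = Q) : OpNormLE Q 1 := fun v => by
  refine enorm2_le_of_sq_le_mul (mul_nonneg zero_le_one (enorm2_nonneg v)) ?_
  calc enorm2 (Q *ᵥ v) ^ 2 = (Q *ᵥ v) ⬝ᵥ v := by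
        rw [enorm2_sq_eq_dotProduct, dotProduct_mulVec, ← mulVec_transpose, mulVec_mulVec,
          hsymm, hidem]
    _ ≤ enorm2 (Q *ᵥ v) * enorm2 v := dotProduct_le_enorm2_mul _ _
    _ = 1 * enorm2 v * enorm2 (Q *ᵥ v) := by ring

lemma transpose_one_sub_mul_transpose {m n : ℕ} (A : Matrix (Fin m) (Fin n) ℝ) :
    (1 - A * Aᵀ)ᵀ = 1 - A * Aᵀ := by
  rw [transpose_sub, transpose_one, transpose_mul, transpose_transpose]

lemma one_sub_mul_transpose_mul_self_s10 {m n : ℕ} {A : Matrix (Fin m) (Fin n) ℝ}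
    (hA : Aᵀ * A = 1) : (1 - A * Aᵀ) * (1 - A * Aᵀ) = 1 - A * Aᵀ := by
  have hidem : A * Aᵀ * (A * Aᵀ) = A * Aᵀ := by
    rw [Matrix.mul_assoc, ← Matrix.mul_assoc Aᵀ, hA, Matrix.one_mul]
  rw [Matrix.sub_mul, Matrix.mul_sub, Matrix.mul_sub, hidem, Matrix.one_mul, Matrix.mul_one,
    Matrix.one_mul]
  abel

lemma frobenius_norm_mul_le_of_opNormLE_left {l m n : ℕ} {A : Matrix (Fin l) (Fin m) ℝ} {σ : ℝ}
    (hσ : 0 ≤ σ) (hA : OpNormLE A σ) (X : Matrix (Fin m) (Fin n) ℝ) : ‖A * X‖ ≤ σ * ‖X‖ := by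
  rw [← frobenius_norm_transpose, ← frobenius_norm_transpose X,
    frobenius_norm_eq_sqrt_sum_enorm2_rows, frobenius_norm_eq_sqrt_sum_enorm2_rows]
  have hcol : ∀ j, (A * X)ᵀ j = A *ᵥ Xᵀ j := fun j => by
    ext i; simp [mul_apply, mulVec, dotProduct]
  calc Real.sqrt (∑ j, enorm2 ((A * X)ᵀ j) ^ 2) ≤ Real.sqrt (∑ j, (σ * enorm2 (Xᵀ j)) ^ 2) := by
        gcongr with j
        · exact enorm2_nonneg _
        · rw [hcol]; exact hA _
    _ = σ * Real.sqrt (∑ j, enorm2 (Xᵀ j) ^ 2) := by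
        simp_rw [mul_pow, ← Finset.mul_sum]
        rw [Real.sqrt_mul (sq_nonneg _), Real.sqrt_sq hσ]

lemma frobenius_norm_mul_le_of_opNormLE_right {l m n : ℕ} {B : Matrix (Fin m) (Fin n) ℝ}
    {σ : ℝ} (hσ : 0 ≤ σ) (hB : OpNormLE B σ) (X : Matrix (Fin l) (Fin m) ℝ) :
    ‖X * B‖ ≤ σ * ‖X‖ := by
  rw [← frobenius_norm_transpose, transpose_mul, ← frobenius_norm_transpose X]
  exact frobenius_norm_mul_le_of_opNormLE_left hσ (hB.transpose hσ) Xᵀ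

lemma frobenius_norm_one_sub_mul_transpose_mul_mul_le {n d : ℕ} {V : Matrix (Fin n) (Fin d) ℝ}
    (hV : Vᵀ * V = 1) (M : Matrix (Fin n) (Fin n) ℝ) : ‖(1 - V * Vᵀ) * M * V‖ ≤ ‖M‖ := by
  have hproj : OpNormLE (1 - V * Vᵀ) 1 :=
    opNormLE_one_of_symm_idem (transpose_one_sub_mul_transpose V)
      (one_sub_mul_transpose_mul_self_s10 hV)
  have hisom : OpNormLE V 1 := opNormLE_one_of_transpose_mul_self hV
  calc ‖(1 - V * Vᵀ) * M * V‖ ≤ 1 * ‖(1 - V * Vᵀ) * M‖ :=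
        frobenius_norm_mul_le_of_opNormLE_right zero_le_one hisom _
    _ ≤ 1 * (1 * ‖M‖) := by
        gcongr; exact frobenius_norm_mul_le_of_opNormLE_left zero_le_one hproj M
    _ = ‖M‖ := by ring

lemma frobenius_norm_mul_transpose_add_mul_add_transpose_le {m n : ℕ}
    {X : Matrix (Fin m) (Fin n) ℝ} {Y : Matrix (Fin n) (Fin m) ℝ} {δ σ : ℝ}
    (hX : ‖X‖ ≤ δ) (hσ : 0 ≤ σ) (hY : OpNormLE Y σ) :
    ‖X * Xᵀ + X * Y + (X * Y)ᵀ‖ ≤ δ ^ 2 + 2 * σ * δ := by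
  have hXY : ‖X * Y‖ ≤ σ * δ :=
    (frobenius_norm_mul_le_of_opNormLE_right hσ hY X).trans (mul_le_mul_of_nonneg_left hX hσ)
  have hXX : ‖X * Xᵀ‖ ≤ δ ^ 2 :=
    calc ‖X * Xᵀ‖ ≤ ‖X‖ * ‖Xᵀ‖ := frobenius_norm_mul _ _
      _ = ‖X‖ ^ 2 := by rw [frobenius_norm_transpose, sq]
      _ ≤ δ ^ 2 := pow_le_pow_left₀ (norm_nonneg X) hX 2
  calc ‖X * Xᵀ + X * Y + (X * Y)ᵀ‖ ≤ ‖X * Xᵀ‖ + ‖X * Y‖ + ‖(X * Y)ᵀ‖ := norm_add₃_le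
    _ ≤ δ ^ 2 + σ * δ + σ * δ := by rw [frobenius_norm_transpose]; gcongr
    _ = δ ^ 2 + 2 * σ * δ := by ring

theorem stmt10_general {n d T : ℕ} (U Uhat : Matrix (Fin n) (Fin d) ℝ)
    (hUhat : Uhatᵀ * Uhat = 1)
    (W : Matrix (Fin n) (Fin T) ℝ)
    (δ : ℝ) (hnoise : frob ((1 - U * Uᵀ) * W) ≤ δ)
    (σmax : ℝ) (hσ : 0 ≤ σmax)
    (hsv : ∀ x : Fin n → ℝ, enorm2 (Wᵀ.mulVec ((U * Uᵀ).mulVec x)) ≤ σmax * enorm2 x)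
    (N : Matrix (Fin n) (Fin d) ℝ)
    (hN : N = (2 : ℝ) • ((1 - Uhat * Uhatᵀ) *
      ((1 - U * Uᵀ) * W * Wᵀ * (1 - U * Uᵀ) + (1 - U * Uᵀ) * W * Wᵀ * (U * Uᵀ)
        + (U * Uᵀ) * W * Wᵀ * (1 - U * Uᵀ)) * Uhat)) :
    frob N ≤ 2 * δ ^ 2 + 4 * σmax * δ := by
  set P := U * Uᵀ
  have hX : ‖(1 - P) * W‖ ≤ δ := frob_eq_frobenius_norm _ ▸ hnoise
  have hY : OpNormLE (Wᵀ * P) σmax := fun x => by rw [← mulVec_mulVec]; exact hsv x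
  have hP : Pᵀ = P := by rw [transpose_mul, transpose_transpose]
  have hbracket : (1 - P) * W * Wᵀ * (1 - P) + (1 - P) * W * Wᵀ * P + P * W * Wᵀ * (1 - P)
      = ((1 - P) * W) * ((1 - P) * W)ᵀ + ((1 - P) * W) * (Wᵀ * P)
        + (((1 - P) * W) * (Wᵀ * P))ᵀ := by
    simp only [transpose_mul, transpose_transpose, transpose_sub, transpose_one, hP,
      Matrix.mul_assoc]
  rw [frob_eq_frobenius_norm, hN, norm_smul, Real.norm_two, hbracket]
  calc 2 * ‖(1 - Uhat * Uhatᵀ) * _ * Uhat‖ ≤ 2 * (δ ^ 2 + 2 * σmax * δ) := by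
        gcongr
        exact (frobenius_norm_one_sub_mul_transpose_mul_mul_le hUhat _).trans
          (frobenius_norm_mul_transpose_add_mul_add_transpose_le hX hσ hY)
    _ = 2 * δ ^ 2 + 4 * σmax * δ := by ring

/-- Noise term bound: Let `U, Û ∈ ℝ^{n×d}` be orthonormal matrices and
`W ∈ ℝ^{n×T}`. Suppose `‖P_U^⊥ W‖_F ≤ δ` for some `δ ≥ 0` and
`‖Wᵀ U Uᵀ x‖₂ ≤ σ̄ ‖x‖₂` for all `x ∈ ℝⁿ` for some `σ̄ ≥ 0`. Let
`N := 2 P_Û^⊥ (P_U^⊥ W Wᵀ P_U^⊥ + P_U^⊥ W Wᵀ P_U + P_U W Wᵀ P_U^⊥) Û`.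
Then `‖N‖_F ≤ 2δ² + 4σ̄δ`. -/
theorem stmt10 {n d T : ℕ} (U Uhat : Matrix (Fin n) (Fin d) ℝ)
    (hU : Uᵀ * U = 1) (hUhat : Uhatᵀ * Uhat = 1)
    (W : Matrix (Fin n) (Fin T) ℝ)
    (δ : ℝ) (hδ : 0 ≤ δ) (hnoise : frob ((1 - U * Uᵀ) * W) ≤ δ)
    (σmax : ℝ) (hσ : 0 ≤ σmax)
    (hsv : ∀ x : Fin n → ℝ, enorm2 (Wᵀ.mulVec ((U * Uᵀ).mulVec x)) ≤ σmax * enorm2 x)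
    (N : Matrix (Fin n) (Fin d) ℝ)
    (hN : N = (2 : ℝ) • ((1 - Uhat * Uhatᵀ) *
      ((1 - U * Uᵀ) * W * Wᵀ * (1 - U * Uᵀ) + (1 - U * Uᵀ) * W * Wᵀ * (U * Uᵀ)
        + (U * Uᵀ) * W * Wᵀ * (1 - U * Uᵀ)) * Uhat)) :
    frob N ≤ 2 * δ ^ 2 + 4 * σmax * δ :=
  stmt10_general U Uhat hUhat W δ hnoise σmax hσ hsv N hN
end

section
/- (Gradient dominance of the squared chordal distance, Lemma 4 part 2.) Let U, Û ∈ ℝ^{n×d} be orthonormal matrices and let 0 ≤ r < 1 be such that tr(Û^⊤ P_U^⊥ Û) ≤ r². Then 4 tr(P_U P_Û P_U^⊥ P_Û) ≥ 4(1 − r²) · tr(Û^⊤ P_U^⊥ Û). (The left-hand side is the squared Frobenius norm of the Riemannian gradient −2 P_Û^⊥ P_U Û of the squared chordal distance.) -/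
/-!
With `P = 1 - U Uᵀ` and `D = Ûᵀ P Û`, orthonormality of `Û` turns the left-hand trace into
`tr ((1 - D) D) = tr D - tr D²`. As `P` is a symmetric idempotent, `D = (P Û)ᵀ (P Û)` is a Gram
matrix, and Cauchy–Schwarz on its entries gives `tr D² ≤ (tr D)² ≤ r² tr D`.
-/

open Matrix

namespace Matrix

section Gram

variable {m n : Type*} [Fintype m]

theorem sq_transpose_mul_self_apply_le (E : Matrix m n ℝ) (i j : n) :
    (Eᵀ * E) i j ^ 2 ≤ (Eᵀ * E) i i * (Eᵀ * E) j j := by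
  simpa only [mul_apply, transpose_apply, sq] using
    Finset.sum_mul_sq_le_sq_mul_sq Finset.univ (fun k => E k i) (fun k => E k j)

theorem trace_transpose_mul_self_mul_self_le_sq [Fintype n] (E : Matrix m n ℝ) :
    trace ((Eᵀ * E) * (Eᵀ * E)) ≤ trace (Eᵀ * E) ^ 2 := by
  have hsymm (i j : n) : (Eᵀ * E) j i = (Eᵀ * E) i j := by
    rw [← transpose_apply (Eᵀ * E), transpose_mul, transpose_transpose]
  calc trace ((Eᵀ * E) * (Eᵀ * E)) = ∑ i, ∑ j, (Eᵀ * E) i j ^ 2 := by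
        simp only [trace, diag, mul_apply (M := Eᵀ * E), hsymm, sq]
    _ ≤ ∑ i, ∑ j, (Eᵀ * E) i i * (Eᵀ * E) j j := by
        gcongr with i _ j _
        exact sq_transpose_mul_self_apply_le E i j
    _ = trace (Eᵀ * E) ^ 2 := by
        simp only [trace, diag, sq, Finset.sum_mul_sum]

end Gram

section Projection

variable {n d R : Type*} [Fintype n] [CommRing R]

theorem isIdempotentElem_mul_transpose [Fintype d] [DecidableEq d] {U : Matrix n d R}
    (hU : Uᵀ * U = 1) : IsIdempotentElem (U * Uᵀ) := by
  rw [IsIdempotentElem, Matrix.mul_assoc, ← Matrix.mul_assoc Uᵀ, hU, Matrix.one_mul]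

theorem transpose_mul_mul_eq_of_isIdempotentElem {P : Matrix n n R} (hsymm : Pᵀ = P)
    (hP : IsIdempotentElem P) (V : Matrix n d R) :
    Vᵀ * P * V = (P * V)ᵀ * (P * V) := by
  rw [transpose_mul, hsymm, Matrix.mul_assoc Vᵀ P (P * V), ← Matrix.mul_assoc P P, hP.eq,
    Matrix.mul_assoc]

theorem trace_one_sub_mul_mul_transpose_mul_mul_mul_transpose [Fintype d] [DecidableEq n]
    [DecidableEq d] {V : Matrix n d R} (hV : Vᵀ * V = 1) (P : Matrix n n R) :
    trace ((1 - P) * (V * Vᵀ) * P * (V * Vᵀ)) =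
      trace (Vᵀ * P * V) - trace ((Vᵀ * P * V) * (Vᵀ * P * V)) := by
  have hcompl : Vᵀ * (1 - P) * V = 1 - Vᵀ * P * V := by
    rw [Matrix.mul_sub, Matrix.sub_mul, Matrix.mul_one, hV]
  calc trace ((1 - P) * (V * Vᵀ) * P * (V * Vᵀ))
      = trace ((Vᵀ * (1 - P) * V) * (Vᵀ * P * V)) := by
        simp only [Matrix.mul_assoc]
        rw [trace_mul_comm Vᵀ]
        simp only [Matrix.mul_assoc]
    _ = trace (Vᵀ * P * V) - trace ((Vᵀ * P * V) * (Vᵀ * P * V)) := by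
        rw [hcompl, Matrix.sub_mul, Matrix.one_mul, trace_sub]

end Projection

end Matrix

theorem stmt12_general {n d : ℕ} (U Uhat : Matrix (Fin n) (Fin d) ℝ)
    (hU : Uᵀ * U = 1) (hUhat : Uhatᵀ * Uhat = 1)
    (r : ℝ)
    (hdist : Matrix.trace (Uhatᵀ * (1 - U * Uᵀ) * Uhat) ≤ r ^ 2) :
    4 * Matrix.trace ((U * Uᵀ) * (Uhat * Uhatᵀ) * (1 - U * Uᵀ) * (Uhat * Uhatᵀ))
      ≥ 4 * (1 - r ^ 2) * Matrix.trace (Uhatᵀ * (1 - U * Uᵀ) * Uhat) := by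
  have hgram :
      Uhatᵀ * (1 - U * Uᵀ) * Uhat = ((1 - U * Uᵀ) * Uhat)ᵀ * ((1 - U * Uᵀ) * Uhat) :=
    transpose_mul_mul_eq_of_isIdempotentElem (by simp)
      (isIdempotentElem_mul_transpose hU).one_sub _
  have htrace_nonneg : 0 ≤ trace (Uhatᵀ * (1 - U * Uᵀ) * Uhat) := by
    rw [hgram]
    exact (posSemidef_conjTranspose_mul_self _).trace_nonneg
  have htrace_sq := trace_transpose_mul_self_mul_self_le_sq ((1 - U * Uᵀ) * Uhat)
  rw [← hgram] at htrace_sq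
  have hlhs := trace_one_sub_mul_mul_transpose_mul_mul_mul_transpose hUhat (1 - U * Uᵀ)
  rw [sub_sub_cancel] at hlhs
  rw [hlhs]
  nlinarith [mul_le_mul_of_nonneg_left hdist htrace_nonneg]

/-- Gradient dominance of the squared chordal distance, Lemma 4 part 2:
Let `U, Û ∈ ℝ^{n×d}` be orthonormal matrices and let `0 ≤ r < 1` be such that
`tr(Ûᵀ P_U^⊥ Û) ≤ r²`. Then
`4 tr(P_U P_Û P_U^⊥ P_Û) ≥ 4(1 − r²) tr(Ûᵀ P_U^⊥ Û)`.
(The left-hand side is the squared Frobenius norm of the Riemannian gradient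
`−2 P_Û^⊥ P_U Û` of the squared chordal distance.) -/
theorem stmt12 {n d : ℕ} (U Uhat : Matrix (Fin n) (Fin d) ℝ)
    (hU : Uᵀ * U = 1) (hUhat : Uhatᵀ * Uhat = 1)
    (r : ℝ) (hr0 : 0 ≤ r) (hr1 : r < 1)
    (hdist : Matrix.trace (Uhatᵀ * (1 - U * Uᵀ) * Uhat) ≤ r ^ 2) :
    4 * Matrix.trace ((U * Uᵀ) * (Uhat * Uhatᵀ) * (1 - U * Uᵀ) * (Uhat * Uhatᵀ))
      ≥ 4 * (1 - r ^ 2) * Matrix.trace (Uhatᵀ * (1 - U * Uᵀ) * Uhat) :=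
  stmt12_general U Uhat hU hUhat r hdist
end
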